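/- arXiv:2104.13626 — 6 statements merged into one kernel-verified Lean document; each statement's English description precedes it below -/
import Mathlib

section
/- For any probability measure D on X×Y and any probability measure Q on H, the Gibbs risk decomposes as r_D(Q) = e_D(Q) + (1/2)·d_D(Q), i.e., the Gibbs risk equals the expected joint error plus half the expected disagreement. -/
open MeasureTheory

variable {X H : Type*} [MeasurableSpace X] [MeasurableSpace H]

/-- Gibbs risk: `r_D(Q) = E_{h~Q} P_{(x,y)~D}[h(x) ≠ y]`. -/
noncomputable def gibbsRisk (D : Measure (X × ℝ)) (Q : Measure H) (f : H → X → ℝ) : ℝ :=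
  ∫ h, (D {p | f h p.1 ≠ p.2}).toReal ∂Q

/-- Expected disagreement: `d_D(Q) = E_{h1~Q} E_{h2~Q} P_{x~D_X}[h1(x) ≠ h2(x)]`. -/
noncomputable def disagreement (D : Measure (X × ℝ)) (Q : Measure H) (f : H → X → ℝ) : ℝ :=
  ∫ h₁, ∫ h₂, ((D.map Prod.fst) {x | f h₁ x ≠ f h₂ x}).toReal ∂Q ∂Q

/-- Expected joint error: `e_D(Q) = E_{h1~Q} E_{h2~Q} P_{(x,y)~D}[h1(x) ≠ y ∧ h2(x) ≠ y]`. -/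
noncomputable def jointError (D : Measure (X × ℝ)) (Q : Measure H) (f : H → X → ℝ) : ℝ :=
  ∫ h₁, ∫ h₂, (D {p | f h₁ p.1 ≠ p.2 ∧ f h₂ p.1 ≠ p.2}).toReal ∂Q ∂Q

/-!
If two votes and a label take at most two distinct values, the votes disagree exactly when one
of them is wrong and the other right; so the disagreement set of `h₁, h₂` is the symmetric
difference of their error sets, and `1[h₁ ≠ y] + 1[h₂ ≠ y] = 2·1[h₁ ≠ y ∧ h₂ ≠ y] + 1[h₁ ≠ h₂]`.
Integrating over `D` gives `r(h₁) + r(h₂) = 2 e(h₁, h₂) + d(h₁, h₂)`, and integrating that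
over `Q ⊗ Q` gives `2 r_D(Q) = 2 e_D(Q) + d_D(Q)`.
-/

theorem ne_iff_of_eq_or_eq_or_eq {α : Type*} {a b y : α} (h : a = b ∨ a = y ∨ b = y) :
    a ≠ b ↔ a ≠ y ∧ b = y ∨ b ≠ y ∧ a = y := by
  rcases h with rfl | rfl | rfl <;> grind

theorem eq_or_eq_or_eq_of_eq_one_or_eq_neg_one {a b y : ℝ} (ha : a = 1 ∨ a = -1)
    (hb : b = 1 ∨ b = -1) (hy : y = 1 ∨ y = -1) : a = b ∨ a = y ∨ b = y := by
  rcases ha with rfl | rfl <;> rcases hb with rfl | rfl <;> rcases hy with rfl | rfl <;> simp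

theorem measureReal_add_measureReal_eq_two_mul_inter_add_symmDiff {α : Type*}
    [MeasurableSpace α] (μ : Measure α) [IsFiniteMeasure μ] {s t : Set α}
    (hs : MeasurableSet s) (ht : MeasurableSet t) :
    μ.real s + μ.real t = 2 * μ.real (s ∩ t) + μ.real (symmDiff s t) := by
  have hs' := measureReal_inter_add_sdiff (μ := μ) (s := s) ht
  have ht' := measureReal_inter_add_sdiff (μ := μ) (s := t) hs
  rw [Set.inter_comm] at ht'
  rw [measureReal_symmDiff_eq hs ht]
  linarith

theorem measureReal_ne_add_measureReal_ne {α Y : Type*} [MeasurableSpace α] [MeasurableSpace Y]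
    [MeasurableEq Y] (μ : Measure α) [IsFiniteMeasure μ] {a b y : α → Y}
    (ha : Measurable a) (hb : Measurable b) (hy : Measurable y)
    (hab : ∀ᵐ p ∂μ, a p = b p ∨ a p = y p ∨ b p = y p) :
    μ.real {p | a p ≠ y p} + μ.real {p | b p ≠ y p} =
      2 * μ.real {p | a p ≠ y p ∧ b p ≠ y p} + μ.real {p | a p ≠ b p} := by
  have hsymm : {p | a p ≠ b p} =ᵐ[μ] symmDiff {p | a p ≠ y p} {p | b p ≠ y p} := by
    filter_upwards [hab] with p hp
    change (p ∈ {p | a p ≠ b p}) = (p ∈ symmDiff {p | a p ≠ y p} {p | b p ≠ y p})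
    simpa [Set.mem_symmDiff] using ne_iff_of_eq_or_eq_or_eq hp
  rw [measureReal_congr hsymm]
  exact measureReal_add_measureReal_eq_two_mul_inter_add_symmDiff μ
    (measurableSet_eq_fun ha hy).compl (measurableSet_eq_fun hb hy).compl

theorem integrable_measureReal_prodMk_left {α β : Type*} [MeasurableSpace α] [MeasurableSpace β]
    (μ : Measure α) (ν : Measure β) [IsFiniteMeasure μ] [IsFiniteMeasure ν]
    {s : Set (α × β)} (hs : MeasurableSet s) :
    Integrable (fun a => ν.real (Prod.mk a ⁻¹' s)) μ :=
  .of_bound (measurable_measure_prodMk_left hs).ennreal_toReal.aestronglyMeasurable (ν.real .univ)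
    (.of_forall fun _ => by
      rw [Real.norm_of_nonneg measureReal_nonneg]
      exact measureReal_mono (Set.subset_univ _))

theorem integral_eq_integral_integral_add_half_of_add_eq {α : Type*} [MeasurableSpace α]
    {μ : Measure α} [IsProbabilityMeasure μ] {r : α → ℝ} {e d : α → α → ℝ}
    (hr : Integrable r μ) (he : Integrable (Function.uncurry e) (μ.prod μ))
    (hd : Integrable (Function.uncurry d) (μ.prod μ))
    (hred : ∀ a b, r a + r b = 2 * e a b + d a b) :
    ∫ a, r a ∂μ = ∫ a, ∫ b, e a b ∂μ ∂μ + 1 / 2 * ∫ a, ∫ b, d a b ∂μ ∂μ := by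
  have hsum : ∫ z, r z.1 + r z.2 ∂μ.prod μ = 2 * ∫ a, r a ∂μ := by
    rw [integral_add (hr.comp_fst μ) (hr.comp_snd μ), integral_fun_fst, integral_fun_snd]
    simp only [probReal_univ, one_smul]
    ring
  have hdecomp : ∫ z, r z.1 + r z.2 ∂μ.prod μ =
      2 * ∫ z, Function.uncurry e z ∂μ.prod μ + ∫ z, Function.uncurry d z ∂μ.prod μ := by
    simp_rw [hred]
    exact (integral_add (he.const_mul 2) hd).trans (by rw [integral_const_mul])
  have he_iter := integral_prod _ he
  have hd_iter := integral_prod _ hd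
  simp only [Function.uncurry_apply_pair] at he_iter hd_iter
  linarith

/-- The Gibbs risk decomposes as the expected joint error plus half the expected
disagreement: `r_D(Q) = e_D(Q) + (1/2)·d_D(Q)`. -/
theorem gibbs_risk_eq_jointError_add_half_disagreement
    (D : Measure (X × ℝ)) [IsProbabilityMeasure D]
    (Q : Measure H) [IsProbabilityMeasure Q]
    (f : H → X → ℝ)
    (hf : Measurable fun p : H × X => f p.1 p.2)
    (hvals : ∀ h x, f h x = 1 ∨ f h x = -1)
    (hlabels : ∀ᵐ p ∂D, p.2 = 1 ∨ p.2 = -1) :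
    gibbsRisk D Q f = jointError D Q f + (1 / 2) * disagreement D Q f := by
  have hdisagreement : disagreement D Q f =
      ∫ h₁, ∫ h₂, D.real {p | f h₁ p.1 ≠ f h₂ p.1} ∂Q ∂Q := by
    simp only [disagreement]
    congr! with h₁ h₂
    rw [Measure.map_apply measurable_fst (by measurability)]
    rfl
  rw [hdisagreement]
  refine integral_eq_integral_integral_add_half_of_add_eq
    (integrable_measureReal_prodMk_left Q D (s := {q | f q.1 q.2.1 ≠ q.2.2}) (by measurability))
    (integrable_measureReal_prodMk_left (Q.prod Q) D
      (s := {q | f q.1.1 q.2.1 ≠ q.2.2 ∧ f q.1.2 q.2.1 ≠ q.2.2}) (by measurability))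
    (integrable_measureReal_prodMk_left (Q.prod Q) D
      (s := {q | f q.1.1 q.2.1 ≠ f q.1.2 q.2.1}) (by measurability))
    fun h₁ h₂ => measureReal_ne_add_measureReal_ne D (by fun_prop) (by fun_prop) measurable_snd ?_
  filter_upwards [hlabels] with p hp
  exact eq_or_eq_or_eq_of_eq_one_or_eq_neg_one (hvals h₁ p.1) (hvals h₂ p.1) hp
end

section
/- For any probability measure D on X×Y and any probability measure Q on H, the risk of the Q-weighted majority vote is at most four times the expected joint error: r^MV_D(Q) ≤ 4·e_D(Q). -/
/-!
Let `w(x, y) = Q {h | h x ≠ y}` be the weight of the voters that err at `(x, y)`. Since votes and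
labels are `±1`, `y · E_Q[h x] = 1 - 2 w(x, y)`, so the majority vote errs only where `w ≥ 1/2`,
and by Markov's inequality applied to `w²` this has probability at most `4 E_D[w²]`. By Fubini,
`E_D[w²]` is the expected joint error.
-/

open MeasureTheory

variable {X H : Type*} [MeasurableSpace X] [MeasurableSpace H]

/-- Majority vote risk (ties count as errors): `r^MV_D(Q) = P_{(x,y)~D}[y·E_{h~Q}[h(x)] ≤ 0]`. -/
noncomputable def mvRisk (D : Measure (X × ℝ)) (Q : Measure H) (f : H → X → ℝ) : ℝ :=
  (D {p | p.2 * ∫ h, f h p.1 ∂Q ≤ 0}).toReal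

open scoped ENNReal

section

variable {α β : Type*} [MeasurableSpace α] [MeasurableSpace β] {μ : Measure α} {ν : Measure β}

theorem measurableSet_setOf_mem_and_mem {s : Set (α × β)} (hs : MeasurableSet s) :
    MeasurableSet {q : (α × α) × β | (q.1.1, q.2) ∈ s ∧ (q.1.2, q.2) ∈ s} :=
  (measurable_fst.fst.prodMk measurable_snd hs).inter
    (measurable_fst.snd.prodMk measurable_snd hs)

theorem measurable_measure_inter_prodMk [SFinite ν] {s : Set (α × β)} (hs : MeasurableSet s) :
    Measurable fun a : α × α => ν (Prod.mk a.1 ⁻¹' s ∩ Prod.mk a.2 ⁻¹' s) :=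
  measurable_measure_prodMk_left (measurableSet_setOf_mem_and_mem hs)

/-- Both sides are the `(μ.prod μ).prod ν`-measure of `{((a₁, a₂), b) | (a₁, b) ∈ s ∧ (a₂, b) ∈ s}`,
whose section at `b` is a square. -/
theorem lintegral_measure_preimage_sq [SFinite μ] [SFinite ν] {s : Set (α × β)}
    (hs : MeasurableSet s) :
    ∫⁻ b, μ ((fun a => (a, b)) ⁻¹' s) ^ 2 ∂ν =
      ∫⁻ a₁, ∫⁻ a₂, ν (Prod.mk a₁ ⁻¹' s ∩ Prod.mk a₂ ⁻¹' s) ∂μ ∂μ := by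
  have ht := measurableSet_setOf_mem_and_mem hs
  calc ∫⁻ b, μ ((fun a => (a, b)) ⁻¹' s) ^ 2 ∂ν
      = ∫⁻ b, (μ.prod μ) (((fun a => (a, b)) ⁻¹' s) ×ˢ ((fun a => (a, b)) ⁻¹' s)) ∂ν := by
        simp only [Measure.prod_prod, sq]
    _ = ((μ.prod μ).prod ν) {q | (q.1.1, q.2) ∈ s ∧ (q.1.2, q.2) ∈ s} :=
        (Measure.prod_apply_symm ht).symm
    _ = _ := by
        rw [Measure.prod_apply ht, lintegral_prod _ (measurable_measure_prodMk_left ht).aemeasurable]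
        rfl

theorem integral_integral_toReal_eq [IsFiniteMeasure ν] {F : α → β → ℝ≥0∞}
    (hF : Measurable (Function.uncurry F)) {c : ℝ≥0∞} (hc : c ≠ ∞) (hFc : ∀ a b, F a b ≤ c) :
    ∫ a, ∫ b, (F a b).toReal ∂ν ∂μ = (∫⁻ a, ∫⁻ b, F a b ∂ν ∂μ).toReal := by
  have hinner : ∀ a, ∫ b, (F a b).toReal ∂ν = (∫⁻ b, F a b ∂ν).toReal := fun a =>
    integral_toReal (hF.comp measurable_prodMk_left).aemeasurable
      (ae_of_all _ fun b => (hFc a b).trans_lt hc.lt_top)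
  simp only [hinner]
  refine integral_toReal hF.lintegral_prod_right.aemeasurable (ae_of_all _ fun a => ?_)
  exact (lintegral_mono (hFc a)).trans_lt (lintegral_const_lt_top hc)

theorem mul_integral_eq_one_sub_two_mul_measureReal [IsProbabilityMeasure μ] {g : α → ℝ} {y : ℝ}
    (hg : ∀ a, g a = 1 ∨ g a = -1) (hy : y = 1 ∨ y = -1) (hs : MeasurableSet {a | g a ≠ y}) :
    y * ∫ a, g a ∂μ = 1 - 2 * μ.real {a | g a ≠ y} := by
  have hvote : ∀ a, y * g a = 1 - 2 * {a | g a ≠ y}.indicator 1 a := by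
    intro a
    by_cases ha : g a = y
    · rcases hy with rfl | rfl <;> simp [ha]
    · rw [Set.indicator_of_mem ha]
      rcases hy with rfl | rfl <;> rcases hg a with h | h <;> simp_all <;> norm_num
  rw [← integral_const_mul, integral_congr_ae (ae_of_all _ hvote),
    integral_sub (integrable_const 1) (((integrable_const 1).indicator hs).const_mul 2),
    integral_const_mul, integral_indicator_one hs]
  simp

theorem two_inv_le_measure_of_mul_integral_nonpos [IsProbabilityMeasure μ] {g : α → ℝ} {y : ℝ}
    (hg : ∀ a, g a = 1 ∨ g a = -1) (hy : y = 1 ∨ y = -1) (hs : MeasurableSet {a | g a ≠ y})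
    (hvote : y * ∫ a, g a ∂μ ≤ 0) :
    2⁻¹ ≤ μ {a | g a ≠ y} := by
  rw [mul_integral_eq_one_sub_two_mul_measureReal hg hy hs] at hvote
  calc (2⁻¹ : ℝ≥0∞) = ENNReal.ofReal 2⁻¹ := by rw [ENNReal.ofReal_inv_of_pos two_pos]; simp
    _ ≤ μ {a | g a ≠ y} := ENNReal.ofReal_le_of_le_toReal (by rw [measureReal_def] at hvote; linarith)

theorem measure_two_inv_le_le_four_mul_lintegral_sq {g : α → ℝ≥0∞} (hg : AEMeasurable g μ) :
    μ {x | 2⁻¹ ≤ g x} ≤ 4 * ∫⁻ x, g x ^ 2 ∂μ := by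
  have hsq : (4 : ℝ≥0∞)⁻¹ = 2⁻¹ ^ 2 := by
    rw [← ENNReal.inv_pow]; norm_num
  calc μ {x | 2⁻¹ ≤ g x} ≤ μ {x | 4⁻¹ ≤ g x ^ 2} :=
        measure_mono fun x (hx : 2⁻¹ ≤ g x) => show 4⁻¹ ≤ g x ^ 2 from hsq ▸ pow_le_pow_left' hx 2
    _ = 4 * (4⁻¹ * μ {x | 4⁻¹ ≤ g x ^ 2}) := by
        rw [← mul_assoc, ENNReal.mul_inv_cancel (by norm_num) (by norm_num), one_mul]
    _ ≤ 4 * ∫⁻ x, g x ^ 2 ∂μ := by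
        gcongr
        exact mul_meas_ge_le_lintegral₀ (hg.pow_const 2) _

end

/-- The risk of the Q-weighted majority vote is at most four times the expected joint error. -/
theorem mvRisk_le_four_jointError
    (D : Measure (X × ℝ)) [IsProbabilityMeasure D]
    (Q : Measure H) [IsProbabilityMeasure Q]
    (f : H → X → ℝ)
    (hf : Measurable fun p : H × X => f p.1 p.2)
    (hvals : ∀ h x, f h x = 1 ∨ f h x = -1)
    (hlabels : ∀ᵐ p ∂D, p.2 = 1 ∨ p.2 = -1) :
    mvRisk D Q f ≤ 4 * jointError D Q f := by
  set err : Set (H × (X × ℝ)) := {q | f q.1 q.2.1 ≠ q.2.2}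
  have herr : MeasurableSet err :=
    (measurableSet_eq_fun (hf.comp (measurable_fst.prodMk measurable_snd.fst))
      measurable_snd.snd).compl
  set w : X × ℝ → ℝ≥0∞ := fun p => Q {h | f h p.1 ≠ p.2}
  have hw : Measurable w := measurable_measure_prodMk_right herr
  have hvote : D {p | p.2 * ∫ h, f h p.1 ∂Q ≤ 0} ≤ D {p | 2⁻¹ ≤ w p} :=
    measure_mono_ae <| hlabels.mono fun p hy hp =>
      two_inv_le_measure_of_mul_integral_nonpos (hvals · p.1) hy (measurable_prodMk_right herr) hp
  have hjoint : jointError D Q f = (∫⁻ p, w p ^ 2 ∂D).toReal :=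
    (integral_integral_toReal_eq (measurable_measure_inter_prodMk herr) ENNReal.one_ne_top
      fun _ _ => prob_le_one).trans (congrArg _ (lintegral_measure_preimage_sq herr).symm)
  have hfin : ∫⁻ p, w p ^ 2 ∂D ≠ ∞ :=
    ((lintegral_mono fun _ => pow_le_one' prob_le_one 2).trans_lt
      (lintegral_const_lt_top ENNReal.one_ne_top)).ne
  calc mvRisk D Q f ≤ (4 * ∫⁻ p, w p ^ 2 ∂D).toReal :=
        ENNReal.toReal_mono (ENNReal.mul_ne_top ENNReal.ofNat_ne_top hfin)
          (hvote.trans (measure_two_inv_le_le_four_mul_lintegral_sq hw.aemeasurable))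
    _ = 4 * jointError D Q f := by rw [hjoint, ENNReal.toReal_mul]; norm_num
end

section
/- For any probability measure D on X×Y and any probability measure Q on H with r_D(Q) < 1/2, if r_D(Q) ≤ d_D(Q) then C_D(Q) ≤ 4·e_D(Q) ≤ 2·r_D(Q), where C_D(Q) = 1 − (1 − 2·r_D(Q))² / (1 − 2·d_D(Q)). -/
open MeasureTheory

variable {X H : Type*} [MeasurableSpace X] [MeasurableSpace H]

/-! Write `w(x, y) = Q{h | h(x) ≠ y}` for the Gibbs risk at a single example. By Fubini,
`r = E_D[w]` and `e = E_D[w²]`, so Jensen gives `r² ≤ e`. Since votes and labels are `±1`, two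
voters disagree exactly when one of them errs and the other does not, whence `d = 2(r - e)`.
With these two relations `C ≤ 4e` becomes `(r - d)² ≥ 0`, and `4e ≤ 2r` becomes `r ≤ d`. -/

open ProbabilityTheory Function

theorem norm_indicator_one_le {α : Type*} (s : Set α) (a : α) : ‖s.indicator (1 : α → ℝ) a‖ ≤ 1 :=
  (norm_indicator_le_norm_self _ _).trans norm_one.le

section

variable {α β : Type*} [MeasurableSpace α] [MeasurableSpace β] {μ : Measure α} {ν : Measure β}

theorem integral_integral_integral_eq_integral_prod_prod [SFinite μ] [SFinite ν]
    {φ : α → α → β → ℝ}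
    (hφ : Integrable (fun q : (α × α) × β => φ q.1.1 q.1.2 q.2) ((μ.prod μ).prod ν)) :
    ∫ a₁, ∫ a₂, ∫ b, φ a₁ a₂ b ∂ν ∂μ ∂μ = ∫ q, φ q.1.1 q.1.2 q.2 ∂((μ.prod μ).prod ν) := by
  rw [integral_prod _ hφ, integral_prod _ hφ.integral_prod_left]

theorem integral_prod_prod_mul [SFinite μ] [SFinite ν] {g k : α → β → ℝ}
    (h : Integrable (fun q : (α × α) × β => g q.1.1 q.2 * k q.1.2 q.2) ((μ.prod μ).prod ν)) :
    ∫ q, g q.1.1 q.2 * k q.1.2 q.2 ∂((μ.prod μ).prod ν)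
      = ∫ b, (∫ a, g a b ∂μ) * ∫ a, k a b ∂μ ∂ν := by
  rw [← integral_prod_swap]
  exact (integral_prod _ h.swap).trans
    (integral_congr_ae (ae_of_all _ fun b => integral_prod_mul (g · b) (k · b)))

theorem sq_integral_le_integral_sq [IsProbabilityMeasure μ] {g : α → ℝ} (hg : MemLp g 2 μ) :
    (∫ a, g a ∂μ) ^ 2 ≤ ∫ a, g a ^ 2 ∂μ :=
  sub_nonneg.mp (variance_eq_sub hg ▸ variance_nonneg g μ)

end

noncomputable def errorIndicator (f : H → X → ℝ) (h : H) (p : X × ℝ) : ℝ :=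
  {p : X × ℝ | f h p.1 ≠ p.2}.indicator 1 p

noncomputable def gibbsRiskAt (Q : Measure H) (f : H → X → ℝ) (p : X × ℝ) : ℝ :=
  ∫ h, errorIndicator f h p ∂Q

section

variable {D : Measure (X × ℝ)} {Q : Measure H} {f : H → X → ℝ}

theorem measurable_errorIndicator (hf : Measurable fun p : H × X => f p.1 p.2) :
    Measurable (uncurry (errorIndicator f)) :=
  measurable_const.indicator <| (measurableSet_eq_fun
    (hf.comp (measurable_fst.prodMk (measurable_fst.comp measurable_snd)))
    (measurable_snd.comp measurable_snd)).compl

theorem measurableSet_ne_label (hf : Measurable fun p : H × X => f p.1 p.2) (h : H) :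
    MeasurableSet {p : X × ℝ | f h p.1 ≠ p.2} :=
  (measurableSet_eq_fun ((hf.comp measurable_prodMk_left).comp measurable_fst)
    measurable_snd).compl

theorem integral_errorIndicator (hf : Measurable fun p : H × X => f p.1 p.2) (h : H) :
    ∫ p, errorIndicator f h p ∂D = (D {p | f h p.1 ≠ p.2}).toReal :=
  integral_indicator_one (measurableSet_ne_label hf h)

theorem integral_errorIndicator_mul (hf : Measurable fun p : H × X => f p.1 p.2) (h₁ h₂ : H) :
    ∫ p, errorIndicator f h₁ p * errorIndicator f h₂ p ∂D
      = (D {p | f h₁ p.1 ≠ p.2 ∧ f h₂ p.1 ≠ p.2}).toReal := by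
  have h := integral_indicator_one (μ := D)
    ((measurableSet_ne_label hf h₁).inter (measurableSet_ne_label hf h₂))
  rwa [Set.inter_indicator_one] at h

theorem integral_errorIndicator_add_sub (hf : Measurable fun p : H × X => f p.1 p.2)
    (hvals : ∀ h x, f h x = 1 ∨ f h x = -1) (hlabels : ∀ᵐ p ∂D, p.2 = 1 ∨ p.2 = -1) (h₁ h₂ : H) :
    ∫ p, errorIndicator f h₁ p + errorIndicator f h₂ p
        - 2 * (errorIndicator f h₁ p * errorIndicator f h₂ p) ∂D
      = ((D.map Prod.fst) {x | f h₁ x ≠ f h₂ x}).toReal := by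
  have hs : MeasurableSet {x | f h₁ x ≠ f h₂ x} :=
    (measurableSet_eq_fun (hf.comp measurable_prodMk_left) (hf.comp measurable_prodMk_left)).compl
  rw [Measure.map_apply measurable_fst hs, ← measureReal_def,
    ← integral_indicator_one (hs.preimage measurable_fst)]
  refine integral_congr_ae ?_
  filter_upwards [hlabels] with ⟨x, y⟩ hy
  simp only [errorIndicator, Set.indicator_apply, Set.mem_ofPred_eq, Pi.one_apply]
  rcases hvals h₁ x with h | h <;> rcases hvals h₂ x with h' | h' <;> rcases hy with rfl | rfl <;>
    norm_num [h, h']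

theorem integrable_errorIndicator_comp {Ω : Type*} [MeasurableSpace Ω] {μ : Measure Ω}
    [IsFiniteMeasure μ] (hf : Measurable fun p : H × X => f p.1 p.2) (π : Ω → H × (X × ℝ))
    (hπ : Measurable π) : Integrable (fun ω => errorIndicator f (π ω).1 (π ω).2) μ :=
  .of_bound ((measurable_errorIndicator hf).comp hπ).aestronglyMeasurable 1
    (ae_of_all _ fun _ => norm_indicator_one_le _ _)

theorem integrable_errorIndicator_fst [IsFiniteMeasure D] [IsFiniteMeasure Q]
    (hf : Measurable fun p : H × X => f p.1 p.2) :
    Integrable (fun q : (H × H) × (X × ℝ) => errorIndicator f q.1.1 q.2) ((Q.prod Q).prod D) :=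
  integrable_errorIndicator_comp hf (fun q : (H × H) × (X × ℝ) => (q.1.1, q.2)) (by fun_prop)

theorem integrable_errorIndicator_snd [IsFiniteMeasure D] [IsFiniteMeasure Q]
    (hf : Measurable fun p : H × X => f p.1 p.2) :
    Integrable (fun q : (H × H) × (X × ℝ) => errorIndicator f q.1.2 q.2) ((Q.prod Q).prod D) :=
  integrable_errorIndicator_comp hf (fun q : (H × H) × (X × ℝ) => (q.1.2, q.2)) (by fun_prop)

theorem integrable_errorIndicator_mul [IsFiniteMeasure D] [IsFiniteMeasure Q]
    (hf : Measurable fun p : H × X => f p.1 p.2) :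
    Integrable
      (fun q : (H × H) × (X × ℝ) => errorIndicator f q.1.1 q.2 * errorIndicator f q.1.2 q.2)
      ((Q.prod Q).prod D) :=
  (integrable_errorIndicator_snd hf).bdd_mul (integrable_errorIndicator_fst hf).aestronglyMeasurable
    (ae_of_all _ fun _ => norm_indicator_one_le _ _)

theorem gibbsRisk_eq_integral_fst [IsProbabilityMeasure D] [IsProbabilityMeasure Q]
    (hf : Measurable fun p : H × X => f p.1 p.2) :
    gibbsRisk D Q f = ∫ q, errorIndicator f q.1.1 q.2 ∂((Q.prod Q).prod D) := calc
  _ = ∫ h₁, ∫ _h₂, ∫ p, errorIndicator f h₁ p ∂D ∂Q ∂Q := by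
    simp only [integral_const, probReal_univ, one_smul, integral_errorIndicator hf]
    rfl
  _ = _ := integral_integral_integral_eq_integral_prod_prod (integrable_errorIndicator_fst hf)

theorem gibbsRisk_eq_integral_snd [IsProbabilityMeasure D] [IsProbabilityMeasure Q]
    (hf : Measurable fun p : H × X => f p.1 p.2) :
    gibbsRisk D Q f = ∫ q, errorIndicator f q.1.2 q.2 ∂((Q.prod Q).prod D) := calc
  _ = ∫ _h₁, ∫ h₂, ∫ p, errorIndicator f h₂ p ∂D ∂Q ∂Q := by
    simp only [integral_const, probReal_univ, one_smul, integral_errorIndicator hf]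
    rfl
  _ = _ := integral_integral_integral_eq_integral_prod_prod (integrable_errorIndicator_snd hf)

theorem jointError_eq_integral [IsFiniteMeasure D] [IsFiniteMeasure Q]
    (hf : Measurable fun p : H × X => f p.1 p.2) :
    jointError D Q f = ∫ q, errorIndicator f q.1.1 q.2 * errorIndicator f q.1.2 q.2
      ∂((Q.prod Q).prod D) := calc
  _ = ∫ h₁, ∫ h₂, ∫ p, errorIndicator f h₁ p * errorIndicator f h₂ p ∂D ∂Q ∂Q := by
    simp only [integral_errorIndicator_mul hf]
    rfl
  _ = _ := integral_integral_integral_eq_integral_prod_prod (integrable_errorIndicator_mul hf)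

theorem disagreement_eq_integral [IsFiniteMeasure D] [IsFiniteMeasure Q]
    (hf : Measurable fun p : H × X => f p.1 p.2) (hvals : ∀ h x, f h x = 1 ∨ f h x = -1)
    (hlabels : ∀ᵐ p ∂D, p.2 = 1 ∨ p.2 = -1) :
    disagreement D Q f = ∫ q, errorIndicator f q.1.1 q.2 + errorIndicator f q.1.2 q.2
      - 2 * (errorIndicator f q.1.1 q.2 * errorIndicator f q.1.2 q.2) ∂((Q.prod Q).prod D) := calc
  _ = ∫ h₁, ∫ h₂, ∫ p, errorIndicator f h₁ p + errorIndicator f h₂ p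
        - 2 * (errorIndicator f h₁ p * errorIndicator f h₂ p) ∂D ∂Q ∂Q := by
    simp only [integral_errorIndicator_add_sub hf hvals hlabels]
    rfl
  _ = _ := integral_integral_integral_eq_integral_prod_prod
    (((integrable_errorIndicator_fst hf).fun_add (integrable_errorIndicator_snd hf)).sub
      ((integrable_errorIndicator_mul hf).const_mul 2))

theorem disagreement_eq_two_mul_gibbsRisk_sub_jointError [IsProbabilityMeasure D]
    [IsProbabilityMeasure Q] (hf : Measurable fun p : H × X => f p.1 p.2)
    (hvals : ∀ h x, f h x = 1 ∨ f h x = -1) (hlabels : ∀ᵐ p ∂D, p.2 = 1 ∨ p.2 = -1) :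
    disagreement D Q f = 2 * (gibbsRisk D Q f - jointError D Q f) := by
  have hfst := integrable_errorIndicator_fst (D := D) (Q := Q) hf
  have hsnd := integrable_errorIndicator_snd (D := D) (Q := Q) hf
  have hmul := integrable_errorIndicator_mul (D := D) (Q := Q) hf
  rw [disagreement_eq_integral hf hvals hlabels,
    integral_sub (hfst.fun_add hsnd) (hmul.const_mul 2), integral_add hfst hsnd, integral_const_mul, ← gibbsRisk_eq_integral_fst hf,
    ← gibbsRisk_eq_integral_snd hf, ← jointError_eq_integral hf]
  ring

theorem gibbsRisk_eq_integral_gibbsRiskAt [IsFiniteMeasure D] [IsFiniteMeasure Q]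
    (hf : Measurable fun p : H × X => f p.1 p.2) :
    gibbsRisk D Q f = ∫ p, gibbsRiskAt Q f p ∂D := by
  simp only [gibbsRisk, ← integral_errorIndicator hf]
  exact integral_integral_swap (integrable_errorIndicator_comp hf id measurable_id)

theorem jointError_eq_integral_gibbsRiskAt_sq [IsFiniteMeasure D] [IsFiniteMeasure Q]
    (hf : Measurable fun p : H × X => f p.1 p.2) :
    jointError D Q f = ∫ p, gibbsRiskAt Q f p ^ 2 ∂D := by
  rw [jointError_eq_integral hf, integral_prod_prod_mul (integrable_errorIndicator_mul hf)]
  simp only [gibbsRiskAt, sq]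

theorem sq_gibbsRisk_le_jointError [IsProbabilityMeasure D] [IsProbabilityMeasure Q]
    (hf : Measurable fun p : H × X => f p.1 p.2) :
    gibbsRisk D Q f ^ 2 ≤ jointError D Q f := by
  have hw : MemLp (gibbsRiskAt Q f) 2 D := by
    refine .of_bound ((measurable_errorIndicator hf).stronglyMeasurable.integral_prod_left'
      ).aestronglyMeasurable 1 (ae_of_all _ fun p => ?_)
    simpa only [gibbsRiskAt, probReal_univ, one_mul] using
      norm_integral_le_of_norm_le_const (μ := Q) (f := (errorIndicator f · p))
        (ae_of_all _ fun _ => norm_indicator_one_le _ _)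
  rw [gibbsRisk_eq_integral_gibbsRiskAt hf, jointError_eq_integral_gibbsRiskAt_sq hf]
  exact sq_integral_le_integral_sq hw

end

noncomputable def cBound (r d : ℝ) : ℝ := 1 - (1 - 2 * r) ^ 2 / (1 - 2 * d)

theorem cBound_le_four_mul {r d e : ℝ} (hd : d = 2 * (r - e)) (he : r ^ 2 ≤ e) :
    cBound r d ≤ 4 * e := by
  have hS : (1 - 2 * r) ^ 2 ≤ 1 - 2 * d := by nlinarith
  rcases ((sq_nonneg _).trans hS).eq_or_lt with h0 | hpos
  · -- `x / 0 = 0` makes `cBound r d = 1` here, and `1 - 2 * d = 0` forces `r = 1/2`, `e = 1/4`.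
    rw [cBound, ← h0, div_zero]
    nlinarith
  · rw [cBound, sub_le_comm, le_div_iff₀ hpos]
    nlinarith [sq_nonneg (r - d)]

theorem cbound_le_four_jointError_le_two_gibbs_general
    (D : Measure (X × ℝ)) [IsProbabilityMeasure D]
    (Q : Measure H) [IsProbabilityMeasure Q]
    (f : H → X → ℝ)
    (hf : Measurable fun p : H × X => f p.1 p.2)
    (hvals : ∀ h x, f h x = 1 ∨ f h x = -1)
    (hlabels : ∀ᵐ p ∂D, p.2 = 1 ∨ p.2 = -1)
    (hrd : gibbsRisk D Q f ≤ disagreement D Q f) :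
    1 - (1 - 2 * gibbsRisk D Q f) ^ 2 / (1 - 2 * disagreement D Q f) ≤
        4 * jointError D Q f ∧
    4 * jointError D Q f ≤ 2 * gibbsRisk D Q f := by
  have hd := disagreement_eq_two_mul_gibbsRisk_sub_jointError (Q := Q) hf hvals hlabels
  exact ⟨cBound_le_four_mul hd (sq_gibbsRisk_le_jointError (D := D) (Q := Q) hf), by linarith⟩

/-- If `r_D(Q) < 1/2` and `r_D(Q) ≤ d_D(Q)` then `C_D(Q) ≤ 4·e_D(Q) ≤ 2·r_D(Q)`,
where `C_D(Q) = 1 − (1 − 2·r_D(Q))²/(1 − 2·d_D(Q))`. -/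
theorem cbound_le_four_jointError_le_two_gibbs
    (D : Measure (X × ℝ)) [IsProbabilityMeasure D]
    (Q : Measure H) [IsProbabilityMeasure Q]
    (f : H → X → ℝ)
    (hf : Measurable fun p : H × X => f p.1 p.2)
    (hvals : ∀ h x, f h x = 1 ∨ f h x = -1)
    (hlabels : ∀ᵐ p ∂D, p.2 = 1 ∨ p.2 = -1)
    (hr : gibbsRisk D Q f < 1 / 2)
    (hrd : gibbsRisk D Q f ≤ disagreement D Q f) :
    1 - (1 - 2 * gibbsRisk D Q f) ^ 2 / (1 - 2 * disagreement D Q f) ≤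
        4 * jointError D Q f ∧
    4 * jointError D Q f ≤ 2 * gibbsRisk D Q f :=
  cbound_le_four_jointError_le_two_gibbs_general D Q f hf hvals hlabels hrd
end

section
/- Danskin's theorem: Let A ⊆ ℝ^m be a nonempty compact set and let φ : ℝ^n × ℝ^m → ℝ be continuous, such that for every a ∈ A the map x ↦ φ(x,a) is differentiable and the gradient map (x,a) ↦ ∇_x φ(x,a) is continuous on ℝ^n × A. Then Φ(x) = max_{a ∈ A} φ(x,a) is directionally differentiable at every x ∈ ℝ^n in every direction d ∈ ℝ^n, and its one-sided directional derivative satisfies Φ'(x; d) = max_{a ∈ A*(x)} ⟨d, ∇_x φ(x,a)⟩, where A*(x) = {a ∈ A : φ(x,a) = Φ(x)} is the set of maximizers. -/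
/-!
Along the line `t ↦ x + t • d` the theorem becomes a statement about the one-parameter
family `ψ t = φ (x + t • d) ·`. Comparing with a fixed maximizer `a` of `ψ 0` bounds the
difference quotient of `t ↦ max ψ t` from below by that of `ψ · a`, whose limit is `ψ' 0 a`.
For the upper bound take a maximizer `aₜ` of `ψ t`: the difference quotient is at most that
of `ψ · aₜ`, which by the mean value theorem is `ψ' c aₜ` for some `0 < c < t`. Maximizers
depend upper semicontinuously on `t`, so for small `t` the point `(c, aₜ)` lies in a tube
around `{0} × A*(x)` on which `ψ'` stays below any bound exceeding `max_{A*(x)} ψ' 0`.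
-/

open Filter Set Topology

def maximizers {α : Type*} (f : α → ℝ) (A : Set α) : Set α :=
  {a ∈ A | f a = sSup (f '' A)}

section Maximizers

variable {α : Type*} [TopologicalSpace α] {A : Set α} {f : α → ℝ}

theorem IsCompact.le_sSup_image (hA : IsCompact A) (hf : ContinuousOn f A) {a : α}
    (ha : a ∈ A) : f a ≤ sSup (f '' A) :=
  le_csSup (hA.bddAbove_image hf) (mem_image_of_mem f ha)

theorem IsCompact.maximizers_nonempty (hA : IsCompact A) (hA₀ : A.Nonempty)
    (hf : ContinuousOn f A) : (maximizers f A).Nonempty :=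
  let ⟨a, ha, hmax⟩ := hA.exists_sSup_image_eq hA₀ hf
  ⟨a, ha, hmax.symm⟩

theorem IsCompact.isCompact_maximizers (hA : IsCompact A) (hf : Continuous f) :
    IsCompact (maximizers f A) :=
  hA.inter_right (isClosed_eq hf continuous_const)

theorem eventually_maximizers_subset {X : Type*} [TopologicalSpace X] {f : X → α → ℝ}
    (hA : IsCompact A) (hf : Continuous ↿f) {x₀ : X} {V : Set α} (hV : IsOpen V)
    (hV₀ : maximizers (f x₀) A ⊆ V) : ∀ᶠ x in 𝓝 x₀, maximizers (f x) A ⊆ V := by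
  have hK : IsCompact (A \ V) := hA.diff hV
  rcases (A \ V).eq_empty_or_nonempty with hK₀ | hK₀
  · exact Eventually.of_forall fun x a ha => sdiff_eq_empty.1 hK₀ ha.1
  obtain ⟨k, hk, hk_max⟩ := hK.exists_sSup_image_eq hK₀ (hf.uncurry_left x₀).continuousOn
  -- outside `V` the maximum is strictly smaller, and both maxima depend continuously on `x`
  have hlt : sSup (f x₀ '' (A \ V)) < sSup (f x₀ '' A) := by
    rw [hk_max]
    exact (hA.le_sSup_image (hf.uncurry_left x₀).continuousOn hk.1).lt_of_ne
      fun h => hk.2 (hV₀ ⟨hk.1, h⟩)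
  filter_upwards [(hK.continuous_sSup hf).continuousAt.eventually_lt
    (hA.continuous_sSup hf).continuousAt hlt] with x hx a ha
  by_contra haV
  have := hK.le_sSup_image (hf.uncurry_left x).continuousOn ⟨ha.1, haV⟩
  linarith [ha.2]

end Maximizers

section RightDerivative

variable {α : Type*} [TopologicalSpace α] {A : Set α} {ψ ψ' : ℝ → α → ℝ}

theorem eventually_lt_sSup_image_sub_div (hA : IsCompact A) (hψ : ∀ t, Continuous (ψ t))
    {a : α} (ha : a ∈ maximizers (ψ 0) A) {g b : ℝ} (hg : HasDerivAt (ψ · a) g 0)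
    (hb : b < g) :
    ∀ᶠ t in 𝓝[>] 0, b < (sSup (ψ t '' A) - sSup (ψ 0 '' A)) / t := by
  filter_upwards [hg.tendsto_slope_zero_right.eventually (lt_mem_nhds hb), self_mem_nhdsWithin]
    with t hbt (ht : 0 < t)
  rw [zero_add, smul_eq_mul, inv_mul_eq_div, ha.2] at hbt
  exact hbt.trans_le (div_le_div_of_nonneg_right
    (sub_le_sub_right (hA.le_sSup_image (hψ t).continuousOn ha.1) _) ht.le)

theorem eventually_sSup_image_sub_div_lt (hA : IsCompact A) (hA₀ : A.Nonempty)
    (hψ : Continuous ↿ψ) (hψ' : ContinuousOn ↿ψ' (univ ×ˢ A))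
    (hderiv : ∀ a ∈ A, ∀ t, HasDerivAt (ψ · a) (ψ' t a) t) {b : ℝ}
    (hb : ∀ a ∈ maximizers (ψ 0) A, ψ' 0 a < b) :
    ∀ᶠ t in 𝓝[>] 0, (sSup (ψ t '' A) - sSup (ψ 0 '' A)) / t < b := by
  obtain ⟨W, hWo, hW⟩ := continuousOn_iff'.1 hψ' (Iio b) isOpen_Iio
  have hSW : {0} ×ˢ maximizers (ψ 0) A ⊆ W := by
    rintro ⟨s, a⟩ ⟨rfl, ha⟩
    have h : ((0 : ℝ), a) ∈ ↿ψ' ⁻¹' Iio b ∩ univ ×ˢ A :=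
      ⟨hb a ha, mem_univ _, ha.1⟩
    rw [hW] at h
    exact h.1
  obtain ⟨U, V, hUo, hVo, h0U, hSV, hUVW⟩ := generalized_tube_lemma isCompact_singleton
    (hA.isCompact_maximizers (hψ.uncurry_left 0)) hWo hSW
  have hUV : ∀ s ∈ U, ∀ a ∈ A ∩ V, ψ' s a < b := by
    intro s hs a ha
    have h : (s, a) ∈ W ∩ univ ×ˢ A := ⟨hUVW ⟨hs, ha.2⟩, mem_univ _, ha.1⟩
    rw [← hW] at h
    exact h.1
  obtain ⟨u, hu, huU⟩ := mem_nhdsGT_iff_exists_Ioo_subset.1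
    (mem_nhdsWithin_of_mem_nhds (hUo.mem_nhds (h0U rfl)))
  filter_upwards [nhdsWithin_le_nhds (eventually_maximizers_subset hA hψ hVo hSV),
    Ioo_mem_nhdsGT hu] with t htV ht
  obtain ⟨a, ha, hmax⟩ := hA.exists_sSup_image_eq hA₀ (hψ.uncurry_left t).continuousOn
  obtain ⟨c, hc, hslope⟩ := exists_hasDerivAt_eq_slope (ψ · a) (ψ' · a) ht.1
    (fun s _ => (hderiv a ha s).continuousAt.continuousWithinAt) (fun s _ => hderiv a ha s)
  calc (sSup (ψ t '' A) - sSup (ψ 0 '' A)) / t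
      ≤ (ψ t a - ψ 0 a) / (t - 0) := by
        rw [hmax, sub_zero]
        exact div_le_div_of_nonneg_right
          (sub_le_sub_left (hA.le_sSup_image (hψ.uncurry_left 0).continuousOn ha) _) ht.1.le
    _ = ψ' c a := hslope.symm
    _ < b := hUV c (huU ⟨hc.1, hc.2.trans ht.2⟩) a ⟨ha, htV ⟨ha, hmax.symm⟩⟩

theorem tendsto_sSup_image_sub_div (hA : IsCompact A) (hA₀ : A.Nonempty)
    (hψ : Continuous ↿ψ) (hψ' : ContinuousOn ↿ψ' (univ ×ˢ A))
    (hderiv : ∀ a ∈ A, ∀ t, HasDerivAt (ψ · a) (ψ' t a) t) :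
    Tendsto (fun t => (sSup (ψ t '' A) - sSup (ψ 0 '' A)) / t) (𝓝[>] 0)
      (𝓝 (sSup (ψ' 0 '' maximizers (ψ 0) A))) := by
  have hS := hA.isCompact_maximizers (hψ.uncurry_left 0)
  have hψ'₀ : ContinuousOn (ψ' 0) (maximizers (ψ 0) A) :=
    hψ'.comp (Continuous.prodMk_right 0).continuousOn fun a ha => ⟨mem_univ _, ha.1⟩
  obtain ⟨a, ha, hmax⟩ := hS.exists_sSup_image_eq
    (hA.maximizers_nonempty hA₀ (hψ.uncurry_left 0).continuousOn) hψ'₀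
  refine tendsto_order.2 ⟨fun b hb => ?_, fun b hb => ?_⟩
  · exact eventually_lt_sSup_image_sub_div hA (hψ.uncurry_left ·) ha (hderiv a ha.1 0)
      (hmax ▸ hb)
  · exact eventually_sSup_image_sub_div_lt hA hA₀ hψ hψ' hderiv fun a' ha' =>
      (hS.le_sSup_image hψ'₀ ha').trans_lt hb

end RightDerivative

theorem HasGradientAt.hasDerivAt_comp_add_smul {F : Type*} [NormedAddCommGroup F]
    [InnerProductSpace ℝ F] [CompleteSpace F] {f : F → ℝ} {f' x d : F} {t : ℝ}
    (hf : HasGradientAt f f' (x + t • d)) :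
    HasDerivAt (fun s : ℝ => f (x + s • d)) (inner ℝ d f') t := by
  have hline : HasDerivAt (fun s : ℝ => x + s • d) d t := by
    simpa using ((hasDerivAt_id t).smul_const d).const_add x
  have h := hf.hasFDerivAt.comp_hasDerivAt t hline
  rw [InnerProductSpace.toDual_apply_apply, real_inner_comm] at h
  exact h

/-- Danskin's theorem: for a nonempty compact `A ⊆ ℝ^m` and a continuous
`φ : ℝ^n × ℝ^m → ℝ` such that `x ↦ φ(x,a)` is differentiable for every `a ∈ A` and
`(x,a) ↦ ∇ₓφ(x,a)` is continuous on `ℝ^n × A`, the function `Φ(x) = max_{a ∈ A} φ(x,a)`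
is directionally differentiable at every `x` in every direction `d`, with one-sided
directional derivative `Φ'(x;d) = max_{a ∈ A*(x)} ⟨d, ∇ₓφ(x,a)⟩`, where
`A*(x) = {a ∈ A : φ(x,a) = Φ(x)}`. -/
theorem danskin {n m : ℕ}
    (A : Set (EuclideanSpace ℝ (Fin m))) (hA : A.Nonempty) (hAc : IsCompact A)
    (φ : EuclideanSpace ℝ (Fin n) → EuclideanSpace ℝ (Fin m) → ℝ)
    (hφ : Continuous fun p : EuclideanSpace ℝ (Fin n) × EuclideanSpace ℝ (Fin m) =>
      φ p.1 p.2)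
    (hdiff : ∀ a ∈ A, Differentiable ℝ fun x => φ x a)
    (hgrad : ContinuousOn
      (fun p : EuclideanSpace ℝ (Fin n) × EuclideanSpace ℝ (Fin m) =>
        gradient (fun x => φ x p.2) p.1)
      (Set.univ ×ˢ A))
    (x d : EuclideanSpace ℝ (Fin n)) :
    Tendsto
      (fun t : ℝ =>
        (sSup ((fun a => φ (x + t • d) a) '' A) - sSup ((fun a => φ x a) '' A)) / t)
      (nhdsWithin 0 (Set.Ioi 0))
      (nhds (sSup ((fun a => (inner ℝ d (gradient (fun x' => φ x' a) x) : ℝ)) ''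
        {a ∈ A | φ x a = sSup ((fun a' => φ x a') '' A)}))) := by
  have hline : Continuous fun p : ℝ × EuclideanSpace ℝ (Fin m) => (x + p.1 • d, p.2) := by
    fun_prop
  have h := tendsto_sSup_image_sub_div (ψ := fun t a => φ (x + t • d) a)
    (ψ' := fun t a => inner ℝ d (gradient (fun x' => φ x' a) (x + t • d))) hAc hA
    (hφ.comp hline)
    (continuousOn_const.inner (hgrad.comp hline.continuousOn fun p hp => ⟨mem_univ _, hp.2⟩))
    fun a ha t => (hdiff a ha _).hasGradientAt.hasDerivAt_comp_add_smul
  simp only [zero_smul, add_zero] at h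
  exact h
end

section
/- Implicit derivative of the kl-inverse with respect to the first argument: let q, p ∈ (0,1) with q ≠ p, and let k be a real-valued function defined on a neighborhood of q with values in (0,1) such that k(q) = p, k is differentiable at q, and kl(u ‖ k(u)) = kl(q ‖ p) for all u in a neighborhood of q. Then k'(q) = ( ln((1−q)/(1−p)) − ln(q/p) ) / ( (1−q)/(1−p) − q/p ). Moreover, the denominator (1−q)/(1−p) − q/p is nonzero because q ≠ p. -/
/-- Binary KL divergence `kl(q‖p) = q·ln(q/p) + (1−q)·ln((1−q)/(1−p))`. -/
noncomputable def klBin (q p : ℝ) : ℝ :=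
  q * Real.log (q / p) + (1 - q) * Real.log ((1 - q) / (1 - p))

/-- Implicit derivative of the kl-inverse with respect to the first argument: if
`q, p ∈ (0,1)` with `q ≠ p`, and `k` takes values in `(0,1)` near `q`, satisfies
`k(q) = p`, is differentiable at `q` with derivative `k'`, and `kl(u‖k(u)) = kl(q‖p)`
for all `u` near `q`, then `k' = (ln((1−q)/(1−p)) − ln(q/p)) / ((1−q)/(1−p) − q/p)`,
the denominator being nonzero because `q ≠ p`. -/
theorem klInv_deriv_first_arg (q p : ℝ)
    (hq : q ∈ Set.Ioo (0 : ℝ) 1) (hp : p ∈ Set.Ioo (0 : ℝ) 1) (hqp : q ≠ p)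
    (k : ℝ → ℝ) (k' : ℝ)
    (hval : k q = p)
    (hrange : ∀ᶠ u in nhds q, k u ∈ Set.Ioo (0 : ℝ) 1)
    (hderiv : HasDerivAt k k' q)
    (hkl : ∀ᶠ u in nhds q, klBin u (k u) = klBin q p) :
    (1 - q) / (1 - p) - q / p ≠ 0 ∧
    k' = (Real.log ((1 - q) / (1 - p)) - Real.log (q / p)) /
      ((1 - q) / (1 - p) - q / p) := by
  obtain ⟨hq0, hq1⟩ := hq
  obtain ⟨hp0, hp1⟩ := hp
  have hp1' : (0:ℝ) < 1 - p := by linarith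
  have hq1' : (0:ℝ) < 1 - q := by linarith
  have hD : (1 - q) / (1 - p) - q / p ≠ 0 := by
    have : (1 - q) / (1 - p) - q / p = (p - q) / (p * (1 - p)) := by
      field_simp; ring
    rw [this]
    exact div_ne_zero (sub_ne_zero.2 (Ne.symm hqp)) (by positivity)
  refine ⟨hD, ?_⟩
  -- the smooth version of the composed function
  set f : ℝ → ℝ := fun u =>
    u * (Real.log u - Real.log (k u)) +
      (1 - u) * (Real.log (1 - u) - Real.log (1 - k u)) with hf
  -- derivative of f at q
  have hkq : k q ≠ 0 := by rw [hval]; exact hp0.ne'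
  have h1kq : (1:ℝ) - k q ≠ 0 := by rw [hval]; exact hp1'.ne'
  have hlogu : HasDerivAt (fun u : ℝ => Real.log u) q⁻¹ q :=
    Real.hasDerivAt_log hq0.ne'
  have hlogk : HasDerivAt (fun u => Real.log (k u)) (k' / k q) q :=
    hderiv.log hkq
  have h1u : HasDerivAt (fun u : ℝ => 1 - u) (0 - 1) q :=
    (hasDerivAt_const q 1).sub (hasDerivAt_id q)
  have h1k : HasDerivAt (fun u => 1 - k u) (0 - k') q :=
    (hasDerivAt_const q 1).sub hderiv
  have hlog1u : HasDerivAt (fun u : ℝ => Real.log (1 - u)) ((0 - 1) / (1 - q)) q :=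
    h1u.log hq1'.ne'
  have hlog1k : HasDerivAt (fun u => Real.log (1 - k u)) ((0 - k') / (1 - k q)) q :=
    h1k.log h1kq
  have hF : HasDerivAt f
      (1 * (Real.log q - Real.log (k q)) + q * (q⁻¹ - k' / k q) +
        ((0 - 1) * (Real.log (1 - q) - Real.log (1 - k q)) +
          (1 - q) * ((0 - 1) / (1 - q) - (0 - k') / (1 - k q)))) q := by
    exact ((hasDerivAt_id q).mul (hlogu.sub hlogk)).add
      (h1u.mul (hlog1u.sub hlog1k))
  -- f equals the constant near q
  have heq : f =ᶠ[nhds q] fun _ => klBin q p := by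
    have hmem : Set.Ioo (0:ℝ) 1 ∈ nhds q := Ioo_mem_nhds hq0 hq1
    filter_upwards [hrange, hkl, hmem] with u hu hklu huI
    have h1 : Real.log (u / k u) = Real.log u - Real.log (k u) :=
      Real.log_div huI.1.ne' hu.1.ne'
    have h2 : Real.log ((1 - u) / (1 - k u)) =
        Real.log (1 - u) - Real.log (1 - k u) :=
      Real.log_div (by linarith [huI.2]) (by linarith [hu.2])
    simp only [hf]
    rw [← hklu]
    simp [klBin, h1, h2]
  have hF0 : HasDerivAt f 0 q := by
    have hc : HasDerivAt (fun _ : ℝ => klBin q p) 0 q := hasDerivAt_const q _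
    exact hc.congr_of_eventuallyEq heq
  have hE := hF.unique hF0
  rw [hval] at hE
  -- now solve
  have hlq : Real.log (q / p) = Real.log q - Real.log p :=
    Real.log_div hq0.ne' hp0.ne'
  have hl1q : Real.log ((1 - q) / (1 - p)) = Real.log (1 - q) - Real.log (1 - p) :=
    Real.log_div hq1'.ne' hp1'.ne'
  rw [hlq, hl1q, eq_div_iff hD]
  have hE' : (Real.log q - Real.log p) - (Real.log (1 - q) - Real.log (1 - p)) +
      k' * ((1 - q) / (1 - p) - q / p) = 0 := by
    rw [← hE]
    field_simp
    ring
  linarith [hE']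
end

section
/- The log-barrier extension is differentiable: for every λ > 0, the function B_λ : ℝ → ℝ defined by B_λ(a) = −(1/λ)·ln(−a) if a ≤ −1/λ², and B_λ(a) = λ·a − (1/λ)·ln(1/λ²) + 1/λ otherwise, is differentiable at every point of ℝ, with derivative B_λ'(a) = −1/(λ·a) for a ≤ −1/λ² and B_λ'(a) = λ for a ≥ −1/λ² (the two formulas agreeing, with common value λ, at a = −1/λ²). -/
open Classical in
/-- The log-barrier extension `B_λ` (Kervadec et al.), defined for `λ > 0` by
`B_λ(a) = −(1/λ)·ln(−a)` if `a ≤ −1/λ²` and `B_λ(a) = λ·a − (1/λ)·ln(1/λ²) + 1/λ`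
otherwise. -/
noncomputable def logBarrierExt (lam : ℝ) (a : ℝ) : ℝ :=
  if a ≤ -1 / lam ^ 2 then -(1 / lam) * Real.log (-a)
  else lam * a - (1 / lam) * Real.log (1 / lam ^ 2) + 1 / lam

/-!
`B_λ` glues two smooth branches at `c = -1/λ²`. The constant `-(1/λ)·ln(1/λ²) + 1/λ` is chosen so
that the branches agree at `c`, and `c` is chosen so that their slopes `-1/(λc)` and `λ` agree
there; the one-sided derivatives at `c` then coincide.
-/

open Set

section Gluing

variable {F : Type*} [NormedAddCommGroup F] [NormedSpace ℝ F] {f g : ℝ → F} {f' : F} {a c : ℝ}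

theorem HasDerivAt.ite_le_of_lt (hf : HasDerivAt f f' a) (ha : a < c) :
    HasDerivAt (fun x => if x ≤ c then f x else g x) f' a :=
  hf.congr_of_eventuallyEq <| by
    filter_upwards [Iio_mem_nhds ha] with x hx
    exact if_pos hx.le

theorem HasDerivAt.ite_le_of_gt (hg : HasDerivAt g f' a) (ha : c < a) :
    HasDerivAt (fun x => if x ≤ c then f x else g x) f' a :=
  hg.congr_of_eventuallyEq <| by
    filter_upwards [Ioi_mem_nhds ha] with x hx
    exact if_neg hx.not_ge

theorem HasDerivAt.ite_le_of_eq (hf : HasDerivAt f f' c) (hg : HasDerivAt g f' c)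
    (hfg : f c = g c) : HasDerivAt (fun x => if x ≤ c then f x else g x) f' c := by
  have hleft : HasDerivWithinAt (fun x => if x ≤ c then f x else g x) f' (Iic c) c :=
    hf.hasDerivWithinAt.congr (fun x hx => if_pos hx) (if_pos le_rfl)
  have hright : HasDerivWithinAt (fun x => if x ≤ c then f x else g x) f' (Ici c) c := by
    refine hg.hasDerivWithinAt.congr (fun x hx => ?_) (by rw [if_pos le_rfl, hfg])
    rcases (mem_Ici.mp hx).eq_or_lt with rfl | hlt
    · rw [if_pos le_rfl, hfg]
    · exact if_neg hlt.not_ge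
  simpa only [Iic_union_Ici, hasDerivWithinAt_univ] using hleft.union hright

end Gluing

section LogBarrierExt

variable (lam : ℝ)

theorem hasDerivAt_neg_one_div_mul_log_neg {a : ℝ} (ha : a ≠ 0) :
    HasDerivAt (fun x => -(1 / lam) * Real.log (-x)) (-1 / (lam * a)) a :=
  (((hasDerivAt_neg a).log (neg_ne_zero.mpr ha)).const_mul (-(1 / lam))).congr_deriv (by ring)

theorem hasDerivAt_mul_sub_add (b d a : ℝ) : HasDerivAt (fun x => lam * x - b + d) lam a := by
  simpa using (((hasDerivAt_id a).const_mul lam).sub_const b).add_const d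

theorem neg_one_div_mul_neg_one_div_sq : -1 / (lam * (-1 / lam ^ 2)) = lam := by
  rcases eq_or_ne lam 0 with rfl | h
  · simp
  · field_simp

variable {lam}

theorem neg_one_div_sq_neg (hlam : lam ≠ 0) : -1 / lam ^ 2 < 0 :=
  div_neg_of_neg_of_pos (by norm_num) (by positivity)

theorem hasDerivAt_logBarrierExt_threshold (hlam : lam ≠ 0) :
    HasDerivAt (logBarrierExt lam) lam (-1 / lam ^ 2) := by
  refine HasDerivAt.ite_le_of_eq ?_ (hasDerivAt_mul_sub_add lam _ _ _) ?_
  · exact (hasDerivAt_neg_one_div_mul_log_neg lam (neg_one_div_sq_neg hlam).ne).congr_deriv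
      (neg_one_div_mul_neg_one_div_sq lam)
  · field_simp
    ring

end LogBarrierExt

/-- For every `λ > 0`, the log-barrier extension `B_λ` is differentiable at every point
of `ℝ`, with derivative `−1/(λ·a)` for `a ≤ −1/λ²` and `λ` for `a ≥ −1/λ²`, the two
formulas agreeing (with common value `λ`) at `a = −1/λ²`. -/
theorem logBarrierExt_differentiable (lam : ℝ) (hlam : 0 < lam) :
    Differentiable ℝ (logBarrierExt lam) ∧
    (∀ a : ℝ, a ≤ -1 / lam ^ 2 → HasDerivAt (logBarrierExt lam) (-1 / (lam * a)) a) ∧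
    (∀ a : ℝ, -1 / lam ^ 2 ≤ a → HasDerivAt (logBarrierExt lam) lam a) ∧
    -1 / (lam * (-1 / lam ^ 2)) = lam := by
  have hjunction := hasDerivAt_logBarrierExt_threshold hlam.ne'
  have hderiv_left (a : ℝ) (ha : a ≤ -1 / lam ^ 2) :
      HasDerivAt (logBarrierExt lam) (-1 / (lam * a)) a := by
    rcases ha.lt_or_eq with ha | rfl
    · exact (hasDerivAt_neg_one_div_mul_log_neg lam
        (ha.trans (neg_one_div_sq_neg hlam.ne')).ne).ite_le_of_lt ha
    · exact hjunction.congr_deriv (neg_one_div_mul_neg_one_div_sq lam).symm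
  have hderiv_right (a : ℝ) (ha : -1 / lam ^ 2 ≤ a) : HasDerivAt (logBarrierExt lam) lam a := by
    rcases ha.lt_or_eq with ha | rfl
    · exact (hasDerivAt_mul_sub_add lam _ _ a).ite_le_of_gt ha
    · exact hjunction
  refine ⟨fun a => ?_, hderiv_left, hderiv_right, neg_one_div_mul_neg_one_div_sq lam⟩
  rcases le_total a (-1 / lam ^ 2) with ha | ha
  exacts [(hderiv_left a ha).differentiableAt, (hderiv_right a ha).differentiableAt]
end
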